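/- Let f and g be real power series with ‖f‖_{1,pol} < ∞ and α(g) < ∞. Then for every finite subset G_n ⊆ G with δ_n > 0, one has b_n(K_n(f)·K_n(g) − K_n(f·g)) ≤ ‖f‖_{1,pol} · α(g), where f·g denotes the Cauchy product of the power series. -/

import Mathlib

open scoped BigOperators Classical
open MeasureTheory Filter ProbabilityTheory

noncomputable section

variable {G : Type*}

/-- Entrywise powers of the kernel `W`. -/
def Wpow (W : G → G → ℝ) : ℕ → G → G → ℝ
  | 0 => fun i j => if i = j then (1 : ℝ) else 0
  | (h + 1) => fun i j => ∑' k, W i k * Wpow W h k j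

/-- The infinite matrix `K(f)` associated to a power series `f`. -/
def Kmat (W : G → G → ℝ) (f : ℕ → ℝ) (i j : G) : ℝ :=
  ∑' h, f h * Wpow W h i j

/-- The finite matrix `K_n(f)`, the restriction of `K(f)` to a finite subset. -/
def Kn (W : G → G → ℝ) (f : ℕ → ℝ) (Gn : Finset G) : Matrix Gn Gn ℝ :=
  Matrix.of fun i j => Kmat W f (i : G) (j : G)

/-- The regularity factor `α(f) = Σ_h |f_h| (h+1)`. -/
def regFactor (f : ℕ → ℝ) : ℝ := ∑' h, |f h| * (h + 1 : ℝ)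

/-- `‖f‖_{1,pol} = Σ_h |f_h|`. -/
def polNorm (f : ℕ → ℝ) : ℝ := ∑' h, |f h|

/-- Cauchy product of power series. -/
def cauchy (f g : ℕ → ℝ) (h : ℕ) : ℝ :=
  ∑ k ∈ Finset.range (h + 1), f k * g (h - k)

/-- The unit power series (`1`). -/
def cauchyOne : ℕ → ℝ := fun h => if h = 0 then 1 else 0

/-- `k`-th Cauchy power of a power series. -/
def cauchyPow (g : ℕ → ℝ) : ℕ → ℕ → ℝ
  | 0 => cauchyOne
  | (k + 1) => cauchy g (cauchyPow g k)

/-- `δ_n`: the cardinality of the boundary of `G_n`. -/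
def boundary (W : G → G → ℝ) (Gn : Finset G) : ℕ :=
  ({i | i ∈ Gn ∧ ∃ j, j ∉ Gn ∧ W i j ≠ 0} : Set G).ncard

/-- The block norm `b_n(B) = (1/δ_n) Σ_{i,j} |B(i,j)|`. -/
def blockNorm (W : G → G → ℝ) (Gn : Finset G) (B : Matrix Gn Gn ℝ) : ℝ :=
  (1 / (boundary W Gn : ℝ)) * ∑ i, ∑ j, |B i j|

/-- Evaluation of a power series at a point. -/
def fEval (f : ℕ → ℝ) (x : ℝ) : ℝ := ∑' h, f h * x ^ h

/-- The class `F_ρ`: positive on `[-1,1]`, with `log f` admitting a power series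
expansion on `[-1,1]` whose regularity factor is at most `ρ`. -/
def memF (ρ : ℝ) (f : ℕ → ℝ) : Prop :=
  Summable (fun h => |f h|) ∧
  (∀ x ∈ Set.Icc (-1 : ℝ) 1, 0 < fEval f x) ∧
  ∃ g : ℕ → ℝ, Summable (fun h => |g h| * (h + 1 : ℝ)) ∧ regFactor g ≤ ρ ∧
    ∀ x ∈ Set.Icc (-1 : ℝ) 1, Real.log (fEval f x) = fEval g x

/-- The standing hypotheses on the kernel `W`: symmetry, degree bounded by `D`,
and entries bounded by `1/D`. -/
def KernelHyp (W : G → G → ℝ) (D : ℕ) : Prop :=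
  (∀ i j, W i j = W j i) ∧
  (∀ i, ({j | W i j ≠ 0} : Set G).Finite) ∧
  (∀ i, ({j | W i j ≠ 0} : Set G).ncard ≤ D) ∧
  (∀ i j, |W i j| ≤ 1 / (D : ℝ))

/-!
Expanding in powers of `W`, the `(i, j)` entry of `K_n(f) K_n(g) - K_n(f·g)` is
`-∑_{h,l} f_h g_l ∑_{k ∉ G_n} W^h(i,k) W^l(k,j)`: the only terms missing from the restricted
product are the walks that are outside `G_n` at time `h`. Columns of `|W^h|` sum to at most `1`,
so after summing over `i, j ∈ G_n` what remains is `∑_{j ∈ G_n} ∑_{k ∉ G_n} |W^l(j,k)|`, the mass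
that `l` steps of `|W|` carry out of `G_n`. One more step keeps at most the mass already outside
and adds at most one unit through each of the `δ_n` boundary vertices, so this is at most `l δ_n`,
and summing against `|f_h| |g_l|` gives `‖f‖_{1,pol} α(g) δ_n`.
-/

open Function

section FiniteSupport

variable {ι : Type*} {F : ι → ℝ}

theorem summable_mul_of_finite_support (hF : (support F).Finite) (x : ι → ℝ) :
    Summable fun k => F k * x k :=
  summable_of_hasFiniteSupport (hF.subset (support_mul_subset_left _ _))

theorem tsum_mul_eq_sum_of_finite_support (hF : (support F).Finite) (x : ι → ℝ) :
    ∑' k, F k * x k = ∑ k ∈ hF.toFinset, F k * x k :=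
  tsum_eq_sum' (by rw [Set.Finite.coe_toFinset]; exact support_mul_subset_left F x)

theorem finite_support_abs (hF : (support F).Finite) : (support fun k => |F k|).Finite :=
  hF.subset fun _ hk => abs_ne_zero.mp hk

theorem tsum_mul_indicator_one_eq_sum (s : Finset ι) (x : ι → ℝ) :
    ∑' k, x k * (s : Set ι).indicator 1 k = ∑ k ∈ s, x k := by
  rw [tsum_eq_sum' (s := s)]
  · exact Finset.sum_congr rfl fun k hk => by simp [hk]
  · intro k hk
    by_contra hks
    simp [hks] at hk

theorem abs_tsum_le_tsum_abs (hF : Summable fun k => |F k|) : |∑' k, F k| ≤ ∑' k, |F k| := by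
  simpa only [Real.norm_eq_abs] using norm_tsum_le_tsum_norm (f := F) hF

end FiniteSupport

theorem summable_prod_of_abs_le {ι κ : Type*} {f : ι → ℝ} {g : κ → ℝ} {F : ι × κ → ℝ}
    (hf : Summable fun h => |f h|) (hg : Summable fun h => |g h|) (C : ℝ)
    (hF : ∀ p, |F p| ≤ C * (|f p.1| * |g p.2|)) : Summable F :=
  Summable.of_norm_bounded
    ((hf.mul_of_nonneg hg (fun _ => abs_nonneg _) fun _ => abs_nonneg _).mul_left C) hF

theorem tsum_prod_eq_tsum_sum_antidiagonal {α A : Type*} [AddCommMonoid α] [TopologicalSpace α]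
    [ContinuousAdd α] [T3Space α] [AddCommMonoid A] [Finset.HasAntidiagonal A] {F : A × A → α}
    (hF : Summable F) : ∑' p, F p = ∑' n, ∑ p ∈ Finset.HasAntidiagonal.antidiagonal n, F p := by
  rw [← Finset.HasAntidiagonal.sigmaAntidiagonalEquivProd.tsum_eq F]
  exact (Summable.tsum_sigma' (fun _ => (hasSum_fintype _).summable)
    ((Equiv.summable_iff _).2 hF)).trans (tsum_congr fun n => Finset.tsum_subtype _ F)

theorem tsum_cauchy_mul_eq_tsum_prod {f g c : ℕ → ℝ} (hf : Summable fun h => |f h|)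
    (hg : Summable fun h => |g h|) {C : ℝ} (hc : ∀ n, |c n| ≤ C) :
    ∑' n, cauchy f g n * c n = ∑' p : ℕ × ℕ, f p.1 * g p.2 * c (p.1 + p.2) := by
  rw [tsum_prod_eq_tsum_sum_antidiagonal (summable_prod_of_abs_le hf hg C fun p => ?_)]
  · refine tsum_congr fun n => ?_
    rw [cauchy, Finset.sum_mul, Finset.Nat.sum_antidiagonal_eq_sum_range_succ_mk]
    refine Finset.sum_congr rfl fun k hk => ?_
    rw [Nat.add_sub_cancel' (Nat.lt_succ_iff.mp (Finset.mem_range.mp hk))]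
  · rw [abs_mul, abs_mul, mul_comm]
    exact mul_le_mul_of_nonneg_right (hc _) (by positivity)

def boundaryFinset (W : G → G → ℝ) (Gn : Finset G) : Finset G :=
  {i ∈ Gn | ∃ j ∉ Gn, W i j ≠ 0}

theorem card_boundaryFinset (W : G → G → ℝ) (Gn : Finset G) :
    (boundaryFinset W Gn).card = boundary W Gn := by
  rw [boundary, ← Set.ncard_coe_finset]
  congr
  ext i
  simp [boundaryFinset]

theorem sum_abs_Kn_mul_sub_Kn (W : G → G → ℝ) (f g φ : ℕ → ℝ) (Gn : Finset G) :
    ∑ i, ∑ j, |(Kn W f Gn * Kn W g Gn - Kn W φ Gn) i j|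
      = ∑ i ∈ Gn, ∑ j ∈ Gn, |∑ k ∈ Gn, Kmat W f i k * Kmat W g k j - Kmat W φ i j| := by
  simp only [Kn, Matrix.sub_apply, Matrix.mul_apply, Matrix.of_apply, ← Finset.sum_coe_sort Gn]

def outerPathWeight (W : G → G → ℝ) (Gn : Finset G) (h l : ℕ) (i j : G) : ℝ :=
  ∑' k, |Wpow W h i k| * (|Wpow W l k j| * (↑Gn : Set G)ᶜ.indicator 1 k)

theorem outerPathWeight_nonneg (W : G → G → ℝ) (Gn : Finset G) (h l : ℕ) (i j : G) :
    0 ≤ outerPathWeight W Gn h l i j :=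
  tsum_nonneg fun k => mul_nonneg (abs_nonneg _)
    (mul_nonneg (abs_nonneg _) (Set.indicator_nonneg (fun _ _ => zero_le_one) k))

section Kernel

variable {W : G → G → ℝ}

theorem Wpow_one (i j : G) : Wpow W 1 i j = W i j := by
  simp [Wpow, mul_ite]

variable (hfin : ∀ i, (support (W i)).Finite)
include hfin

theorem Wpow_succ_eq_sum (h : ℕ) (i j : G) :
    Wpow W (h + 1) i j = ∑ k ∈ (hfin i).toFinset, W i k * Wpow W h k j :=
  tsum_mul_eq_sum_of_finite_support (hfin i) _

theorem finite_support_Wpow (h : ℕ) (i : G) : (support (Wpow W h i)).Finite := by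
  induction h generalizing i with
  | zero =>
    refine (Set.finite_singleton i).subset fun j hj => ?_
    by_contra hij
    exact hj (if_neg (Ne.symm hij))
  | succ h ih =>
    refine ((hfin i).toFinset.finite_toSet.biUnion fun k _ => ih k).subset ?_
    simp_rw [funext (Wpow_succ_eq_sum hfin h i)]
    exact (Finset.support_sum _ _).trans (Set.biUnion_mono (fun _ h => h) fun k _ =>
      support_mul_subset_right _ _)

theorem Wpow_add (h l : ℕ) (i j : G) :
    Wpow W (h + l) i j = ∑' k, Wpow W h i k * Wpow W l k j := by
  induction h generalizing i with
  | zero => simp [Wpow, ite_mul, tsum_ite_eq']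
  | succ h ih =>
    have hsum : ∀ k ∈ (hfin i).toFinset,
        Summable fun m => W i k * (Wpow W h k m * Wpow W l m j) := fun k _ =>
      (summable_mul_of_finite_support (finite_support_Wpow hfin h k) _).mul_left _
    rw [Nat.add_right_comm, Wpow_succ_eq_sum hfin]
    simp_rw [ih, ← tsum_mul_left, ← Summable.tsum_finsetSum hsum, Wpow_succ_eq_sum hfin,
      Finset.sum_mul, mul_assoc]

theorem Wpow_succ' (h : ℕ) (i j : G) : Wpow W (h + 1) i j = ∑' k, Wpow W h i k * W k j := by
  simp_rw [Wpow_add hfin, Wpow_one]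

theorem Wpow_comm (hsym : ∀ i j, W i j = W j i) (h : ℕ) (i j : G) :
    Wpow W h i j = Wpow W h j i := by
  induction h generalizing i j with
  | zero => simp [Wpow, eq_comm]
  | succ h ih =>
    rw [Wpow_succ' hfin h j i]
    exact tsum_congr fun k => by rw [hsym, ih, mul_comm]

theorem tsum_abs_Wpow_succ_mul_le {φ : G → ℝ} (hφ : 0 ≤ φ) (l : ℕ) (j : G) :
    ∑' k, |Wpow W (l + 1) j k| * φ k ≤ ∑' m, |Wpow W l j m| * ∑' k, |W m k| * φ k := by
  have hfinl := finite_support_abs (finite_support_Wpow hfin l j)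
  set S := hfinl.toFinset
  have hsum : ∀ m ∈ S, Summable fun k => |Wpow W l j m| * (|W m k| * φ k) := fun m _ =>
    (summable_mul_of_finite_support (finite_support_abs (hfin m)) φ).mul_left _
  have hentry (k : G) : |Wpow W (l + 1) j k| ≤ ∑ m ∈ S, |Wpow W l j m| * |W m k| := by
    rw [Wpow_succ' hfin, tsum_eq_sum' (s := S)]
    · exact (Finset.abs_sum_le_sum_abs _ _).trans_eq (by simp_rw [abs_mul])
    · exact fun m hm => by simpa [S] using left_ne_zero_of_mul hm
  calc ∑' k, |Wpow W (l + 1) j k| * φ k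
      ≤ ∑' k, ∑ m ∈ S, |Wpow W l j m| * (|W m k| * φ k) := by
        refine Summable.tsum_le_tsum (fun k => ?_)
          (summable_mul_of_finite_support (finite_support_abs (finite_support_Wpow hfin _ j)) φ)
          (summable_sum hsum)
        simp_rw [← mul_assoc, ← Finset.sum_mul]
        exact mul_le_mul_of_nonneg_right (hentry k) (hφ k)
    _ = ∑ m ∈ S, |Wpow W l j m| * ∑' k, |W m k| * φ k := by
        simp_rw [Summable.tsum_finsetSum hsum, tsum_mul_left]
    _ = ∑' m, |Wpow W l j m| * ∑' k, |W m k| * φ k :=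
        (tsum_mul_eq_sum_of_finite_support hfinl _).symm

theorem tsum_abs_le_one_of_ncard_le {D : ℕ} (hcard : ∀ i, (support (W i)).ncard ≤ D)
    (hbd : ∀ i j, |W i j| ≤ 1 / D) (i : G) : ∑' j, |W i j| ≤ 1 := by
  have hS := hfin i
  rw [tsum_eq_sum' (s := hS.toFinset)
    (by rw [Set.Finite.coe_toFinset]; exact support_comp_subset abs_zero (W i))]
  calc ∑ j ∈ hS.toFinset, |W i j| ≤ hS.toFinset.card • (1 / D : ℝ) :=
        Finset.sum_le_card_nsmul _ _ _ fun j _ => hbd i j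
    _ ≤ D * (1 / D : ℝ) := by
        rw [nsmul_eq_mul, ← Set.ncard_eq_toFinset_card _ hS]
        gcongr
        exact_mod_cast hcard i
    _ ≤ 1 := by rw [mul_one_div]; exact div_self_le_one _

theorem Wpow_add_eq_sum_add_tsum_compl (Gn : Finset G) (h l : ℕ) (i j : G) :
    Wpow W (h + l) i j = ∑ k ∈ Gn, Wpow W h i k * Wpow W l k j
      + ∑' k, Wpow W h i k * Wpow W l k j * (↑Gn : Set G)ᶜ.indicator 1 k := by
  have hS := finite_support_Wpow hfin h i
  have hsum (s : Set G) : Summable fun k => Wpow W h i k * Wpow W l k j * s.indicator 1 k := by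
    simpa only [mul_assoc] using summable_mul_of_finite_support hS _
  rw [Wpow_add hfin, ← tsum_mul_indicator_one_eq_sum, ← Summable.tsum_add (hsum _) (hsum _)]
  simp_rw [← mul_add, Set.indicator_self_add_compl_apply, Pi.one_apply, mul_one]

theorem abs_Wpow_add_sub_sum_le (Gn : Finset G) (h l : ℕ) (i j : G) :
    |Wpow W (h + l) i j - ∑ k ∈ Gn, Wpow W h i k * Wpow W l k j|
      ≤ outerPathWeight W Gn h l i j := by
  have hχ (k : G) : |(↑Gn : Set G)ᶜ.indicator (1 : G → ℝ) k| = (↑Gn : Set G)ᶜ.indicator 1 k :=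
    abs_of_nonneg (Set.indicator_nonneg (fun _ _ => zero_le_one) k)
  rw [Wpow_add_eq_sum_add_tsum_compl hfin, add_sub_cancel_left]
  refine (abs_tsum_le_tsum_abs ?_).trans_eq (tsum_congr fun k => ?_)
  · simpa only [abs_mul, hχ, mul_assoc] using summable_mul_of_finite_support
      (finite_support_abs (finite_support_Wpow hfin h i)) _
  · rw [abs_mul, abs_mul, hχ, mul_assoc]

variable (hrow : ∀ i, ∑' j, |W i j| ≤ 1)
include hrow

theorem tsum_abs_Wpow_le_one (l : ℕ) (i : G) : ∑' j, |Wpow W l i j| ≤ 1 := by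
  induction l generalizing i with
  | zero => simp [Wpow, apply_ite]
  | succ l ih =>
    have hS := finite_support_abs (finite_support_Wpow hfin l i)
    calc ∑' j, |Wpow W (l + 1) i j|
        = ∑' j, |Wpow W (l + 1) i j| * (1 : G → ℝ) j := by simp
      _ ≤ ∑' m, |Wpow W l i m| * ∑' k, |W m k| * (1 : G → ℝ) k :=
        tsum_abs_Wpow_succ_mul_le hfin zero_le_one l i
      _ ≤ ∑' m, |Wpow W l i m| :=
        Summable.tsum_le_tsum
          (fun m => mul_le_of_le_one_right (abs_nonneg _) (by simpa using hrow m))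
          (summable_mul_of_finite_support hS _) (summable_of_hasFiniteSupport hS)
      _ ≤ 1 := ih i

theorem sum_abs_Wpow_le_one (s : Finset G) (l : ℕ) (i : G) : ∑ j ∈ s, |Wpow W l i j| ≤ 1 :=
  (Summable.sum_le_tsum s (fun _ _ => abs_nonneg _) (summable_of_hasFiniteSupport
    (finite_support_abs (finite_support_Wpow hfin l i)))).trans
    (tsum_abs_Wpow_le_one hfin hrow l i)

theorem abs_Wpow_le_one (l : ℕ) (i j : G) : |Wpow W l i j| ≤ 1 := by
  simpa using sum_abs_Wpow_le_one hfin hrow {j} l i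

theorem tsum_abs_mul_indicator_compl_le (Gn : Finset G) (m : G) :
    ∑' k, |W m k| * (↑Gn : Set G)ᶜ.indicator 1 k
      ≤ (↑Gn : Set G)ᶜ.indicator 1 m + (↑(boundaryFinset W Gn) : Set G).indicator 1 m := by
  by_cases hm : m ∈ Gn ∧ m ∉ boundaryFinset W Gn
  · have hzero : ∀ k, |W m k| * (↑Gn : Set G)ᶜ.indicator 1 k = 0 := fun k => by
      by_cases hk : k ∈ Gn
      · simp [hk]
      · simp_all [boundaryFinset]
    simp [hzero, hm.1, hm.2]
  · have hrhs : (1 : ℝ)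
        ≤ (↑Gn : Set G)ᶜ.indicator 1 m + (↑(boundaryFinset W Gn) : Set G).indicator 1 m := by
      by_cases hGn : m ∈ Gn <;> simp_all [Set.indicator_apply, apply_ite]
    refine le_trans ?_ hrhs
    calc ∑' k, |W m k| * (↑Gn : Set G)ᶜ.indicator 1 k ≤ ∑' k, |W m k| :=
          Summable.tsum_le_tsum
            (fun k => mul_le_of_le_one_right (abs_nonneg _) (Set.indicator_le_self' (by simp) k))
            (summable_mul_of_finite_support (finite_support_abs (hfin m)) _)
            (summable_of_hasFiniteSupport (finite_support_abs (hfin m)))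
      _ ≤ 1 := hrow m

theorem sum_tsum_abs_Wpow_mul_indicator_compl_le (hsym : ∀ i j, W i j = W j i)
    (Gn : Finset G) (l : ℕ) :
    ∑ j ∈ Gn, ∑' k, |Wpow W l j k| * (↑Gn : Set G)ᶜ.indicator 1 k ≤ l * boundary W Gn := by
  set χ : G → ℝ := (↑Gn : Set G)ᶜ.indicator 1
  set χB : G → ℝ := (↑(boundaryFinset W Gn) : Set G).indicator 1
  induction l with
  | zero =>
    refine (Finset.sum_eq_zero fun j hj => ?_).le.trans (by simp)
    simp [χ, Wpow, apply_ite, ite_mul, tsum_ite_eq', hj]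
  | succ l ih =>
    have hstep (j : G) : ∑' k, |Wpow W (l + 1) j k| * χ k
        ≤ ∑' m, |Wpow W l j m| * χ m + ∑ m ∈ boundaryFinset W Gn, |Wpow W l j m| := by
      have hS := finite_support_abs (finite_support_Wpow hfin l j)
      calc ∑' k, |Wpow W (l + 1) j k| * χ k ≤ ∑' m, |Wpow W l j m| * ∑' k, |W m k| * χ k :=
            tsum_abs_Wpow_succ_mul_le hfin (Set.indicator_nonneg (fun _ _ => zero_le_one)) l j
        _ ≤ ∑' m, (|Wpow W l j m| * χ m + |Wpow W l j m| * χB m) := by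
            refine Summable.tsum_le_tsum (fun m => ?_) (summable_mul_of_finite_support hS _)
              ((summable_mul_of_finite_support hS _).add (summable_mul_of_finite_support hS _))
            rw [← mul_add]
            exact mul_le_mul_of_nonneg_left (tsum_abs_mul_indicator_compl_le hfin hrow Gn m)
              (abs_nonneg _)
        _ = _ := by
            rw [Summable.tsum_add (summable_mul_of_finite_support hS _)
              (summable_mul_of_finite_support hS _), tsum_mul_indicator_one_eq_sum]
    have hbd : ∑ j ∈ Gn, ∑ m ∈ boundaryFinset W Gn, |Wpow W l j m| ≤ boundary W Gn := by
      rw [Finset.sum_comm, ← card_boundaryFinset, ← nsmul_one]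
      refine Finset.sum_le_card_nsmul _ _ _ fun m _ => ?_
      simp_rw [Wpow_comm hfin hsym l _ m]
      exact sum_abs_Wpow_le_one hfin hrow Gn l m
    calc ∑ j ∈ Gn, ∑' k, |Wpow W (l + 1) j k| * χ k
        ≤ ∑ j ∈ Gn, (∑' m, |Wpow W l j m| * χ m + ∑ m ∈ boundaryFinset W Gn, |Wpow W l j m|) :=
          Finset.sum_le_sum fun j _ => hstep j
      _ ≤ l * boundary W Gn + boundary W Gn := by
          rw [Finset.sum_add_distrib]
          exact add_le_add ih hbd
      _ = (l + 1 : ℕ) * boundary W Gn := by push_cast; ring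

theorem tsum_abs_Wpow_mul_le_one {ψ : G → ℝ} (hψ : ψ ≤ 1) (h : ℕ) (i : G) :
    ∑' k, |Wpow W h i k| * ψ k ≤ 1 := by
  have hS := finite_support_abs (finite_support_Wpow hfin h i)
  refine le_trans ?_ (tsum_abs_Wpow_le_one hfin hrow h i)
  exact Summable.tsum_le_tsum (fun k => mul_le_of_le_one_right (abs_nonneg _) (hψ k))
    (summable_mul_of_finite_support hS ψ) (summable_of_hasFiniteSupport hS)

theorem outerPathWeight_le_one (Gn : Finset G) (h l : ℕ) (i j : G) :
    outerPathWeight W Gn h l i j ≤ 1 :=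
  tsum_abs_Wpow_mul_le_one hfin hrow (fun k => mul_le_one₀ (abs_Wpow_le_one hfin hrow l k j)
    (Set.indicator_nonneg (fun _ _ => zero_le_one) k) (Set.indicator_le_self' (by simp) k)) h i

theorem summable_mul_outerPathWeight {f g : ℕ → ℝ} (hf : Summable fun h => |f h|)
    (hg : Summable fun h => |g h|) (Gn : Finset G) (i j : G) :
    Summable fun p : ℕ × ℕ => |f p.1| * |g p.2| * outerPathWeight W Gn p.1 p.2 i j :=
  summable_prod_of_abs_le hf hg 1 fun p => by
    rw [abs_of_nonneg (mul_nonneg (by positivity) (outerPathWeight_nonneg ..)), one_mul]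
    exact mul_le_of_le_one_right (by positivity) (outerPathWeight_le_one hfin hrow ..)

theorem sum_sum_outerPathWeight_le (hsym : ∀ i j, W i j = W j i) (Gn : Finset G) (h l : ℕ) :
    ∑ i ∈ Gn, ∑ j ∈ Gn, outerPathWeight W Gn h l i j ≤ l * boundary W Gn := by
  unfold outerPathWeight
  set χ : G → ℝ := (↑Gn : Set G)ᶜ.indicator 1
  have hχ : 0 ≤ χ := Set.indicator_nonneg fun _ _ => zero_le_one
  have hcol (j : G) : ∑' k, |Wpow W l k j| * χ k = ∑' k, |Wpow W l j k| * χ k :=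
    tsum_congr fun k => by rw [Wpow_comm hfin hsym l k j]
  have hsum (i j : G) : Summable fun k => |Wpow W h i k| * (|Wpow W l k j| * χ k) :=
    summable_mul_of_finite_support (finite_support_abs (finite_support_Wpow hfin h i)) _
  have hcol_summable (j : G) : Summable fun k => |Wpow W l k j| * χ k := by
    simpa only [Wpow_comm hfin hsym l _ j] using
      summable_mul_of_finite_support (finite_support_abs (finite_support_Wpow hfin l j)) χ
  calc ∑ i ∈ Gn, ∑ j ∈ Gn, ∑' k, |Wpow W h i k| * (|Wpow W l k j| * χ k)
      = ∑ j ∈ Gn, ∑' k, (∑ i ∈ Gn, |Wpow W h i k|) * (|Wpow W l k j| * χ k) := by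
        rw [Finset.sum_comm]
        refine Finset.sum_congr rfl fun j _ => ?_
        simp_rw [Finset.sum_mul, Summable.tsum_finsetSum fun i _ => hsum i j]
    _ ≤ ∑ j ∈ Gn, ∑' k, |Wpow W l k j| * χ k := by
        refine Finset.sum_le_sum fun j _ => Summable.tsum_le_tsum (fun k => ?_)
          (by simpa only [Finset.sum_mul] using summable_sum fun i _ => hsum i j) (hcol_summable j)
        refine mul_le_of_le_one_left (mul_nonneg (abs_nonneg _) (hχ k)) ?_
        simpa only [Wpow_comm hfin hsym h _ k] using sum_abs_Wpow_le_one hfin hrow Gn h k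
    _ ≤ l * boundary W Gn := by
        simpa only [hcol] using sum_tsum_abs_Wpow_mul_indicator_compl_le hfin hrow hsym Gn l

theorem abs_sum_Kmat_mul_sub_Kmat_cauchy_le {f g : ℕ → ℝ} (hf : Summable fun h => |f h|)
    (hg : Summable fun h => |g h|) (Gn : Finset G) (i j : G) :
    |∑ k ∈ Gn, Kmat W f i k * Kmat W g k j - Kmat W (cauchy f g) i j|
      ≤ ∑' p : ℕ × ℕ, |f p.1| * |g p.2| * outerPathWeight W Gn p.1 p.2 i j := by
  have hW := abs_Wpow_le_one hfin hrow
  have hK {φ : ℕ → ℝ} (hφ : Summable fun h => |φ h|) (a b : G) :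
      Summable fun h => ‖φ h * Wpow W h a b‖ :=
    hφ.of_nonneg_of_le (fun _ => norm_nonneg _) fun h => by
      rw [Real.norm_eq_abs, abs_mul]
      exact mul_le_of_le_one_right (abs_nonneg _) (hW h a b)
  have hterm (k : G) :
      Summable fun p : ℕ × ℕ => f p.1 * g p.2 * (Wpow W p.1 i k * Wpow W p.2 k j) :=
    summable_prod_of_abs_le hf hg 1 fun p => by
      rw [abs_mul, abs_mul, abs_mul, one_mul]
      exact mul_le_of_le_one_right (by positivity)
        (mul_le_one₀ (hW _ i k) (abs_nonneg _) (hW _ k j))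
  have hprod (k : G) : Kmat W f i k * Kmat W g k j
      = ∑' p : ℕ × ℕ, f p.1 * g p.2 * (Wpow W p.1 i k * Wpow W p.2 k j) := by
    rw [Kmat, Kmat, tsum_mul_tsum_of_summable_norm (hK hf i k) (hK hg k j)]
    exact tsum_congr fun p => by ring
  have hdiff (p : ℕ × ℕ) : |∑ k ∈ Gn, f p.1 * g p.2 * (Wpow W p.1 i k * Wpow W p.2 k j)
        - f p.1 * g p.2 * Wpow W (p.1 + p.2) i j|
      ≤ |f p.1| * |g p.2| * outerPathWeight W Gn p.1 p.2 i j := by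
    rw [← Finset.mul_sum, ← mul_sub, abs_mul, abs_mul, abs_sub_comm]
    gcongr
    exact abs_Wpow_add_sub_sum_le hfin Gn p.1 p.2 i j
  have hdiff_summable := summable_prod_of_abs_le hf hg 1 fun p => by
    rw [abs_abs, one_mul]
    exact (hdiff p).trans (mul_le_of_le_one_right (by positivity)
      (outerPathWeight_le_one hfin hrow Gn _ _ i j))
  have hcauchy_summable : Summable fun p : ℕ × ℕ => f p.1 * g p.2 * Wpow W (p.1 + p.2) i j :=
    summable_prod_of_abs_le hf hg 1 fun p => by
      rw [abs_mul, abs_mul, one_mul]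
      exact mul_le_of_le_one_right (by positivity) (hW _ i j)
  rw [Finset.sum_congr rfl fun k _ => hprod k, ← Summable.tsum_finsetSum fun k _ => hterm k,
    Kmat, tsum_cauchy_mul_eq_tsum_prod hf hg fun n => hW n i j,
    ← Summable.tsum_sub (summable_sum fun k _ => hterm k) hcauchy_summable]
  exact (abs_tsum_le_tsum_abs hdiff_summable).trans (Summable.tsum_le_tsum hdiff hdiff_summable
    (summable_mul_outerPathWeight hfin hrow hf hg Gn i j))

theorem sum_abs_Kn_mul_sub_Kn_cauchy_le (hsym : ∀ i j, W i j = W j i) {f g : ℕ → ℝ}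
    (hf : Summable fun h => |f h|) (hg : Summable fun h => |g h| * (h + 1 : ℝ)) (Gn : Finset G) :
    ∑ i, ∑ j, |(Kn W f Gn * Kn W g Gn - Kn W (cauchy f g) Gn) i j|
      ≤ polNorm f * regFactor g * boundary W Gn := by
  set δ : ℝ := (boundary W Gn : ℝ)
  have hg' : Summable fun h => |g h| := hg.of_nonneg_of_le (fun _ => abs_nonneg _) fun h =>
    le_mul_of_one_le_right (abs_nonneg _) (by simp)
  have hL := summable_mul_outerPathWeight hfin hrow hf hg' Gn
  rw [sum_abs_Kn_mul_sub_Kn]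
  calc ∑ i ∈ Gn, ∑ j ∈ Gn, |∑ k ∈ Gn, Kmat W f i k * Kmat W g k j - Kmat W (cauchy f g) i j|
        ≤ ∑ i ∈ Gn, ∑ j ∈ Gn, ∑' p : ℕ × ℕ,
          |f p.1| * |g p.2| * outerPathWeight W Gn p.1 p.2 i j :=
        Finset.sum_le_sum fun i _ => Finset.sum_le_sum fun j _ =>
          abs_sum_Kmat_mul_sub_Kmat_cauchy_le hfin hrow hf hg' Gn i j
    _ = ∑' p : ℕ × ℕ, |f p.1| * |g p.2| *
          ∑ i ∈ Gn, ∑ j ∈ Gn, outerPathWeight W Gn p.1 p.2 i j := by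
        simp_rw [Finset.mul_sum, ← Summable.tsum_finsetSum fun j _ => hL _ j,
          ← Summable.tsum_finsetSum fun i _ => summable_sum fun j _ => hL i j]
    _ ≤ ∑' p : ℕ × ℕ, |f p.1| * (|g p.2| * (p.2 + 1 : ℝ)) * δ := by
        refine Summable.tsum_le_tsum (fun p => ?_)
          (by simpa only [Finset.mul_sum] using
            summable_sum fun i _ => summable_sum fun j _ => hL i j)
          ((hf.mul_of_nonneg hg (fun _ => abs_nonneg _) fun _ => by positivity).mul_right δ)
        calc |f p.1| * |g p.2| * ∑ i ∈ Gn, ∑ j ∈ Gn, outerPathWeight W Gn p.1 p.2 i j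
            ≤ |f p.1| * |g p.2| * ((p.2 + 1) * δ) := by
              gcongr
              exact (sum_sum_outerPathWeight_le hfin hrow hsym Gn p.1 p.2).trans
                (by gcongr; linarith)
          _ = |f p.1| * (|g p.2| * (p.2 + 1 : ℝ)) * δ := by ring
    _ = polNorm f * regFactor g * δ := by
        rw [tsum_mul_right, ← Summable.tsum_mul_tsum hf hg
          (hf.mul_of_nonneg hg (fun _ => abs_nonneg _) fun _ => by positivity), polNorm, regFactor]

end Kernel

theorem stmt1_general {G : Type*} (W : G → G → ℝ) (D : ℕ)
    (hker : KernelHyp W D)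
    (f g : ℕ → ℝ)
    (hf : Summable (fun h => |f h|))
    (hg : Summable (fun h => |g h| * (h + 1 : ℝ)))
    (Gn : Finset G) :
    blockNorm W Gn (Kn W f Gn * Kn W g Gn - Kn W (cauchy f g) Gn)
      ≤ polNorm f * regFactor g := by
  obtain ⟨hsym, hfin, hcard, hbd⟩ := hker
  have hrow := tsum_abs_le_one_of_ncard_le hfin hcard hbd
  have hP : 0 ≤ polNorm f * regFactor g :=
    mul_nonneg (tsum_nonneg fun _ => abs_nonneg _) (tsum_nonneg fun _ => by positivity)
  calc blockNorm W Gn (Kn W f Gn * Kn W g Gn - Kn W (cauchy f g) Gn)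
      ≤ 1 / boundary W Gn * (polNorm f * regFactor g * boundary W Gn) := by
        rw [blockNorm]
        exact mul_le_mul_of_nonneg_left (sum_abs_Kn_mul_sub_Kn_cauchy_le hfin hrow hsym hf hg Gn)
          (by positivity)
    _ = polNorm f * regFactor g * (boundary W Gn / boundary W Gn) := by ring
    _ ≤ polNorm f * regFactor g := mul_le_of_le_one_right hP (div_self_le_one _)

/-- For power series `f, g` with `‖f‖_{1,pol} < ∞` and `α(g) < ∞`,
`b_n(K_n(f)·K_n(g) − K_n(f·g)) ≤ ‖f‖_{1,pol} · α(g)`. -/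
theorem stmt1 {G : Type*} [Countable G] (W : G → G → ℝ) (D : ℕ) (hD : 0 < D)
    (hker : KernelHyp W D)
    (f g : ℕ → ℝ)
    (hf : Summable (fun h => |f h|))
    (hg : Summable (fun h => |g h| * (h + 1 : ℝ)))
    (Gn : Finset G) (hδ : 0 < boundary W Gn) :
    blockNorm W Gn (Kn W f Gn * Kn W g Gn - Kn W (cauchy f g) Gn)
      ≤ polNorm f * regFactor g :=
  stmt1_general W D hker f g hf hg Gn

end
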